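/- In the pointwise r-gather algorithm, for every point p, if R_i >= rho_r(P,p), then p belongs to some cluster at the end of phase i; consequently, in the final output every point p is at distance at most 4*beta*C*rho_r(p) from its assigned center. -/

import Mathlib

/-- `u` and `v` are within graph distance `k` in `G`. -/
def withinDist {V : Type*} (G : SimpleGraph V) (k : ℕ) (u v : V) : Prop :=
  ∃ w : G.Walk u v, w.length ≤ k

/-- The subgraph of the `k`-th power of `G` induced by the vertex set `A`. -/
def inducedPower {V : Type*} (G : SimpleGraph V) (A : Set V) (k : ℕ) : SimpleGraph V where
  Adj u v := u ≠ v ∧ u ∈ A ∧ v ∈ A ∧ withinDist G k u v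
  symm := ⟨by
    rintro u v ⟨h1, h2, h3, w, hw⟩
    exact ⟨h1.symm, h3, h2, w.reverse, by simpa using hw⟩⟩
  loopless := ⟨by rintro u ⟨h1, -⟩; exact h1 rfl⟩

/-- The distance from `p` to its `r`-th nearest neighbor in `P`. -/
noncomputable def rhoNN {X : Type*} [MetricSpace X] (P : Finset X) (r : ℕ) (p : X) : ℝ :=
  sInf {R : ℝ | 0 ≤ R ∧ r ≤ (P.filter fun q => dist p q ≤ R).card}

/-!
A point is clustered in the first phase `i` whose radius `R_i = 2^i δ` reaches `ρ_r(p)`: at that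
radius the near neighbor graph gives `p` at least `r` neighbors, and every unclustered point with
`r` neighbors is clustered in that phase. By induction on the phases, a point clustered by the end
of phase `i` is within `β C R_i` of its center: it either joins a new center along a walk of at most
`2β` edges of length `≤ C R_i`, or joins the cluster of a neighbor clustered earlier, paying one edge
on top of `β C R_{i-1}`. Since centers never change, the bound of the first phase applies, and
minimality of that phase gives `R_i ≤ 4 ρ_r(p)` (`δ ≤ ρ_r(p)` covers phase `0`).
-/

theorem dist_le_length_mul_of_walk {X : Type*} [MetricSpace X] {G : SimpleGraph X}
    {D : ℝ} (hG : ∀ u v, G.Adj u v → dist u v ≤ D) {u v : X} (w : G.Walk u v) :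
    dist u v ≤ w.length * D := by
  induction w with
  | nil => simp
  | cons h w ih =>
    calc dist _ _ ≤ dist _ _ + dist _ _ := dist_triangle _ _ _
      _ ≤ D + w.length * D := add_le_add (hG _ _ h) ih
      _ = _ := by push_cast [SimpleGraph.Walk.length_cons]; ring

theorem withinDist.dist_le {X : Type*} [MetricSpace X] {G : SimpleGraph X} {k : ℕ} {u v : X}
    {D : ℝ} (h : withinDist G k u v) (hG : ∀ u v, G.Adj u v → dist u v ≤ D) (hD : 0 ≤ D) :
    dist u v ≤ k * D := by
  obtain ⟨w, hw⟩ := h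
  exact (dist_le_length_mul_of_walk hG w).trans (by gcongr)

section rhoNN

open Finset

variable {X : Type*} [MetricSpace X] {P : Finset X} {r : ℕ} {p : X}

theorem rhoNN_set_nonempty (hcard : r ≤ P.card) :
    {R : ℝ | 0 ≤ R ∧ r ≤ (P.filter fun q => dist p q ≤ R).card}.Nonempty := by
  refine ⟨∑ q ∈ P, dist p q, sum_nonneg fun _ _ => dist_nonneg, ?_⟩
  rwa [filter_true_of_mem fun q hq => single_le_sum (f := fun q => dist p q)
    (fun _ _ => dist_nonneg) hq]

theorem le_card_filter_dist_le_rhoNN (hcard : r ≤ P.card) :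
    r ≤ (P.filter fun q => dist p q ≤ rhoNN P r p).card := by
  -- the infimum is attained: some `R` in the defining set lies below every distance exceeding it
  obtain ⟨R, hRS, hR⟩ : ∃ R ∈ {R : ℝ | 0 ≤ R ∧ r ≤ (P.filter fun q => dist p q ≤ R).card},
      ∀ q ∈ P, rhoNN P r p < dist p q → R < dist p q := by
    rcases (P.filter fun q => rhoNN P r p < dist p q).eq_empty_or_nonempty with hT | hT
    · obtain ⟨R, hR⟩ := rhoNN_set_nonempty (p := p) hcard
      exact ⟨R, hR, fun q hq hlt => absurd (mem_filter.2 ⟨hq, hlt⟩) (hT ▸ notMem_empty q)⟩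
    · obtain ⟨R, hRS, hRlt⟩ := exists_lt_of_csInf_lt (rhoNN_set_nonempty hcard)
        ((lt_inf'_iff hT).2 fun q hq => (mem_filter.1 hq).2)
      exact ⟨R, hRS, fun q hq hlt => hRlt.trans_le (inf'_le _ (mem_filter.2 ⟨hq, hlt⟩))⟩
  refine hRS.2.trans (card_le_card fun q hq => ?_)
  simp only [mem_filter] at hq ⊢
  exact ⟨hq.1, not_lt.1 fun h => (hR q hq.1 h).not_ge hq.2⟩

theorem le_card_filter_dist_le_of_rhoNN_le (hcard : r ≤ P.card) {R : ℝ} (h : rhoNN P r p ≤ R) :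
    r ≤ (P.filter fun q => dist p q ≤ R).card :=
  (le_card_filter_dist_le_rhoNN hcard).trans <|
    card_le_card <| monotone_filter_right P fun _ _ hq => hq.trans h

theorem le_rhoNN_of_separated {δ : ℝ} (hr : 2 ≤ r) (hcard : r ≤ P.card) (hp : p ∈ P)
    (hsep : ∀ p ∈ P, ∀ q ∈ P, p ≠ q → δ ≤ dist p q) : δ ≤ rhoNN P r p := by
  refine le_csInf (rhoNN_set_nonempty hcard) ?_
  rintro R ⟨-, hRr⟩
  obtain ⟨q, hq, hqp⟩ := exists_mem_ne (by omega : 1 < (P.filter fun q => dist p q ≤ R).card) p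
  rw [mem_filter] at hq
  exact (hsep p hp q hq.1 (Ne.symm hqp)).trans hq.2

end rhoNN

theorem two_pow_succ_mul_le_four_mul {δ ρ : ℝ} {j : ℕ} (hδ : 0 ≤ δ) (hδρ : δ ≤ ρ)
    (hj : ∀ k, j = k + 1 → 2 ^ k * δ < ρ) : 2 ^ (j + 1) * δ ≤ 4 * ρ := by
  cases j with
  | zero => norm_num; linarith
  | succ k => linarith [hj k rfl, show (2 : ℝ) ^ (k + 1 + 1) * δ = 4 * (2 ^ k * δ) by ring]

theorem exists_first_phase_of_eq_some {X : Type*} {c : ℕ → X → Option X}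
    (hinit : ∀ p, c 0 p = none)
    (hU4 : ∀ i p s, c i p = some s → c (i + 1) p = some s) {i : ℕ} {p s : X}
    (h : c i p = some s) : ∃ j < i, c j p = none ∧ c (j + 1) p = some s := by
  induction i with
  | zero => simp [hinit] at h
  | succ i ih =>
    cases hi : c i p with
    | none => exact ⟨i, i.lt_succ_self, hi, h⟩
    | some s' =>
      obtain rfl : s' = s := Option.some_injective _ ((hU4 i p s' hi).symm.trans h)
      obtain ⟨j, hj, hj'⟩ := ih hi
      exact ⟨j, hj.trans i.lt_succ_self, hj'⟩

section GatherPhases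

open Classical

variable {X : Type*} [MetricSpace X] {P : Finset X} {r β : ℕ} {C δ : ℝ}
  {G : ℕ → SimpleGraph X} {c : ℕ → X → Option X} {Pp Pppp S : ℕ → Finset X}

theorem isSome_succ_of_rhoNN_le (hcard : r ≤ P.card)
    (hG2 : ∀ i, ∀ p ∈ P,
      r ≤ (P.filter fun q => (G i).Adj p q ∨ q = p).card ∨
      ∀ q ∈ P, dist p q ≤ 2 ^ i * δ → ((G i).Adj p q ∨ q = p))
    (hPp : ∀ i, Pp i = P.filter fun p =>
      r ≤ (P.filter fun q => (G i).Adj p q ∨ q = p).card)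
    (hU2 : ∀ i, ∀ p ∈ Pppp i, ∃ s ∈ S i, c (i + 1) p = some s ∧
      withinDist (G i) (2 * β) p s ∧
      ∀ s' ∈ S i, ∀ m : ℕ, withinDist (G i) m p s' → withinDist (G i) m p s)
    (hU3 : ∀ i, ∀ p ∈ Pp i, c i p = none → p ∉ Pppp i →
      ∃ q ∈ P, (G i).Adj p q ∧ (c i q).isSome ∧ c (i + 1) p = c i q)
    (hU4 : ∀ i p s, c i p = some s → c (i + 1) p = some s)
    {i : ℕ} {p : X} (hp : p ∈ P) (hρ : rhoNN P r p ≤ 2 ^ i * δ) : (c (i + 1) p).isSome := by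
  cases hcp : c i p with
  | some s => simp [hU4 i p s hcp]
  | none =>
    have hPpi : p ∈ Pp i := by
      rw [hPp i, Finset.mem_filter]
      refine ⟨hp, (hG2 i p hp).elim id fun hnbhd => ?_⟩
      exact (le_card_filter_dist_le_of_rhoNN_le hcard hρ).trans <|
        Finset.card_le_card <| Finset.monotone_filter_right P hnbhd
    by_cases hP4 : p ∈ Pppp i
    · obtain ⟨s, -, hcs, -⟩ := hU2 i p hP4
      simp [hcs]
    · obtain ⟨q, -, -, hqs, hcq⟩ := hU3 i p hPpi hcp hP4
      rwa [hcq]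

theorem dist_le_of_eq_some (hC : 0 ≤ C) (hδ : 0 ≤ δ) (hβ : 1 ≤ β)
    (hinit : ∀ p, c 0 p = none)
    (hG1 : ∀ i p q, (G i).Adj p q → dist p q ≤ C * (2 ^ i * δ))
    (hU2 : ∀ i, ∀ p ∈ Pppp i, ∃ s ∈ S i, c (i + 1) p = some s ∧
      withinDist (G i) (2 * β) p s ∧
      ∀ s' ∈ S i, ∀ m : ℕ, withinDist (G i) m p s' → withinDist (G i) m p s)
    (hU3 : ∀ i, ∀ p ∈ Pp i, c i p = none → p ∉ Pppp i →
      ∃ q ∈ P, (G i).Adj p q ∧ (c i q).isSome ∧ c (i + 1) p = c i q)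
    (hU4 : ∀ i p s, c i p = some s → c (i + 1) p = some s)
    (hU5 : ∀ i p, c i p = none → p ∉ Pppp i → p ∉ Pp i → c (i + 1) p = none) :
    ∀ i p s, c i p = some s → dist p s ≤ β * C * (2 ^ i * δ) := by
  have hβ' : (1 : ℝ) ≤ β := by exact_mod_cast hβ
  intro i
  induction i with
  | zero => simp [hinit]
  | succ i ih =>
    intro p s h
    have hedge : 0 ≤ C * (2 ^ i * δ) := by positivity
    have hdouble : β * C * (2 ^ (i + 1) * δ) = 2 * β * (C * (2 ^ i * δ)) := by ring
    rw [hdouble]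
    cases hcp : c i p with
    | some s' =>
      obtain rfl : s' = s := Option.some_injective _ ((hU4 i p s' hcp).symm.trans h)
      have := ih p s' hcp
      nlinarith
    | none =>
      by_cases hP4 : p ∈ Pppp i
      · obtain ⟨s', -, hcs, hwalk, -⟩ := hU2 i p hP4
        obtain rfl : s' = s := Option.some_injective _ (hcs.symm.trans h)
        exact_mod_cast hwalk.dist_le (hG1 i) hedge
      by_cases hPpi : p ∈ Pp i
      · obtain ⟨q, -, hadj, -, hcq⟩ := hU3 i p hPpi hcp hP4
        calc dist p s ≤ dist p q + dist q s := dist_triangle p q s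
          _ ≤ C * (2 ^ i * δ) + β * C * (2 ^ i * δ) :=
            add_le_add (hG1 i p q hadj) (ih q s (hcq.symm.trans h))
          _ ≤ 2 * β * (C * (2 ^ i * δ)) := by nlinarith
      · simp [hU5 i p hcp hP4 hPpi] at h

end GatherPhases

open Classical in
theorem stmt13_general {X : Type*} [MetricSpace X]
    (P : Finset X) (r : ℕ)
    (C : ℝ) (hC : 1 ≤ C) (β : ℕ) (hβ : 1 ≤ β) (δ : ℝ) (hδ : 0 < δ)
    (hr2 : 2 ≤ r) (hcard : r ≤ P.card)
    (hmin : ∀ p ∈ P, ∀ q ∈ P, p ≠ q → δ ≤ dist p q)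
    (G : ℕ → SimpleGraph X)
    (c : ℕ → X → Option X)
    (Pp Pppp : ℕ → Finset X) (S : ℕ → Finset X)
    (hG1 : ∀ i p q, (G i).Adj p q → dist p q ≤ C * (2 ^ i * δ))
    (hG2 : ∀ i, ∀ p ∈ P,
      r ≤ (P.filter fun q => (G i).Adj p q ∨ q = p).card ∨
      ∀ q ∈ P, dist p q ≤ 2 ^ i * δ → ((G i).Adj p q ∨ q = p))
    -- `P'_i`: vertices with at least `r` vertices in their closed `G i`-neighborhood
    (hPp : ∀ i, Pp i = P.filter fun p =>
      r ≤ (P.filter fun q => (G i).Adj p q ∨ q = p).card)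
    -- no point is clustered initially, and points outside `P` are never clustered
    (hinit : ∀ p, c 0 p = Option.none)
    -- each point of `P'''_i` joins the cluster of a closest member of `S i`
    (hU2 : ∀ i, ∀ p ∈ Pppp i, ∃ s ∈ S i, c (i + 1) p = some s ∧
      withinDist (G i) (2 * β) p s ∧
      ∀ s' ∈ S i, ∀ m : ℕ, withinDist (G i) m p s' → withinDist (G i) m p s)
    -- each unclustered point of `P'_i \ P'''_i` joins an adjacent existing cluster
    (hU3 : ∀ i, ∀ p ∈ Pp i, c i p = Option.none → p ∉ Pppp i →
      ∃ q ∈ P, (G i).Adj p q ∧ (c i q).isSome ∧ c (i + 1) p = c i q)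
    -- already clustered points keep their centers
    (hU4 : ∀ i p s, c i p = some s → c (i + 1) p = some s)
    -- no other point is clustered in phase `i`
    (hU5 : ∀ i p, c i p = Option.none → p ∉ Pppp i → p ∉ Pp i →
      c (i + 1) p = Option.none) :
    (∀ i, ∀ p ∈ P, rhoNN P r p ≤ 2 ^ i * δ → (c (i + 1) p).isSome) ∧
    (∀ i, ∀ p ∈ P, ∀ s, c i p = some s → dist p s ≤ 4 * β * C * rhoNN P r p) := by
  have clustered : ∀ i, ∀ p ∈ P, rhoNN P r p ≤ 2 ^ i * δ → (c (i + 1) p).isSome :=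
    fun i p hp => isSome_succ_of_rhoNN_le hcard hG2 hPp hU2 hU3 hU4 hp
  refine ⟨clustered, fun i p hp s hs => ?_⟩
  obtain ⟨j, -, hj, hjs⟩ := exists_first_phase_of_eq_some hinit hU4 hs
  have hradius : 2 ^ (j + 1) * δ ≤ 4 * rhoNN P r p := by
    refine two_pow_succ_mul_le_four_mul hδ.le (le_rhoNN_of_separated hr2 hcard hp hmin) ?_
    rintro k rfl
    by_contra! hk
    simpa [hj] using clustered k p hp hk
  calc dist p s ≤ β * C * (2 ^ (j + 1) * δ) :=
        dist_le_of_eq_some (by linarith) hδ.le hβ hinit hG1 hU2 hU3 hU4 hU5 _ _ _ hjs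
    _ ≤ β * C * (4 * rhoNN P r p) := by gcongr
    _ = 4 * β * C * rhoNN P r p := by ring

open Classical in
/-- Pointwise `r`-gather algorithm (Algorithm 4), pointwise guarantee: if
`R_i = 2^i·δ ≥ ρ_r(P,p)` then `p` is clustered by the end of phase `i`; consequently
every clustered point `p` is at distance at most `4·β·C·ρ_r(P,p)` from its center. -/
theorem stmt13 {X : Type*} [MetricSpace X]
    (P : Finset X) (r : ℕ) (hr : 1 ≤ r)
    (C : ℝ) (hC : 1 ≤ C) (β : ℕ) (hβ : 1 ≤ β) (δ : ℝ) (hδ : 0 < δ)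
    (hr2 : 2 ≤ r) (hcard : r ≤ P.card)
    (hmin : ∀ p ∈ P, ∀ q ∈ P, p ≠ q → δ ≤ dist p q)
    (G : ℕ → SimpleGraph X)
    (c : ℕ → X → Option X)
    (Pp Ppp Pppp : ℕ → Finset X) (S : ℕ → Finset X)
    -- `G i` is a `C`-approximate `(R_i, r)`-near neighbor graph of `P`
    (hGP : ∀ i p q, (G i).Adj p q → p ∈ P ∧ q ∈ P)
    (hG1 : ∀ i p q, (G i).Adj p q → dist p q ≤ C * (2 ^ i * δ))
    (hG2 : ∀ i, ∀ p ∈ P,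
      r ≤ (P.filter fun q => (G i).Adj p q ∨ q = p).card ∨
      ∀ q ∈ P, dist p q ≤ 2 ^ i * δ → ((G i).Adj p q ∨ q = p))
    -- `P'_i`: vertices with at least `r` vertices in their closed `G i`-neighborhood
    (hPp : ∀ i, Pp i = P.filter fun p =>
      r ≤ (P.filter fun q => (G i).Adj p q ∨ q = p).card)
    -- `P''_i`: vertices of `P'_i` whose closed neighborhood is entirely unclustered
    (hPpp : ∀ i, Ppp i = (Pp i).filter fun p =>
      ∀ q ∈ P, ((G i).Adj p q ∨ q = p) → c i q = Option.none)
    -- `S i` is a `β`-ruling set of `(G_i²)[P''_i]`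
    (hS1 : ∀ i, S i ⊆ Ppp i)
    (hS2 : ∀ i, ∀ s ∈ S i, ∀ s' ∈ S i, s ≠ s' →
      ¬ (inducedPower (G i) (↑(Ppp i)) 2).Adj s s')
    (hS3 : ∀ i, ∀ p ∈ Ppp i, ∃ s ∈ S i,
      withinDist (inducedPower (G i) (↑(Ppp i)) 2) β p s)
    -- `P'''_i`: unclustered points at `G i`-distance at most `2β` from `S i`
    (hPppp : ∀ i, Pppp i = P.filter fun p =>
      c i p = Option.none ∧ ∃ s ∈ S i, withinDist (G i) (2 * β) p s)
    -- no point is clustered initially, and points outside `P` are never clustered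
    (hinit : ∀ p, c 0 p = Option.none)
    (hout : ∀ i p, p ∉ P → c i p = Option.none)
    -- phase `i`: each point of `S i` becomes the center of a new cluster
    (hU1 : ∀ i, ∀ s ∈ S i, c (i + 1) s = some s)
    -- each point of `P'''_i` joins the cluster of a closest member of `S i`
    (hU2 : ∀ i, ∀ p ∈ Pppp i, ∃ s ∈ S i, c (i + 1) p = some s ∧
      withinDist (G i) (2 * β) p s ∧
      ∀ s' ∈ S i, ∀ m : ℕ, withinDist (G i) m p s' → withinDist (G i) m p s)
    -- each unclustered point of `P'_i \ P'''_i` joins an adjacent existing cluster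
    (hU3 : ∀ i, ∀ p ∈ Pp i, c i p = Option.none → p ∉ Pppp i →
      ∃ q ∈ P, (G i).Adj p q ∧ (c i q).isSome ∧ c (i + 1) p = c i q)
    -- already clustered points keep their centers
    (hU4 : ∀ i p s, c i p = some s → c (i + 1) p = some s)
    -- no other point is clustered in phase `i`
    (hU5 : ∀ i p, c i p = Option.none → p ∉ Pppp i → p ∉ Pp i →
      c (i + 1) p = Option.none) :
    (∀ i, ∀ p ∈ P, rhoNN P r p ≤ 2 ^ i * δ → (c (i + 1) p).isSome) ∧
    (∀ i, ∀ p ∈ P, ∀ s, c i p = some s → dist p s ≤ 4 * β * C * rhoNN P r p) :=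
  stmt13_general P r C hC β hβ δ hδ hr2 hcard hmin G c Pp Pppp S hG1 hG2 hPp hinit hU2 hU3 hU4 hU5
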